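/- arXiv:2401.05184 — 5 statements merged into one kernel-verified Lean document; each statement's English description precedes it below -/
import Mathlib

section
/- Let N, t be positive integers and n_1, ..., n_t natural numbers with each n_i ≤ N. Then there exist integers a_1, ..., a_t, not all zero, such that |a_i| ≤ (tN)^(1/t) + 1 for all i and |a_1 n_1 + ... + a_t n_t| ≤ (tN)^(1/t). -/
/-- Pigeonhole small-combination lemma: for positive integers `N, t` and naturals
`n₁,…,n_t ≤ N`, there exist integers `a₁,…,a_t`, not all zero, with
`|aᵢ| ≤ (tN)^(1/t) + 1` and `|∑ aᵢ nᵢ| ≤ (tN)^(1/t)`. -/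
theorem stmt_0 (N t : ℕ) (hN : 0 < N) (ht : 0 < t) (n : Fin t → ℕ)
    (hn : ∀ i, n i ≤ N) :
    ∃ a : Fin t → ℤ, (∃ i, a i ≠ 0) ∧
      (∀ i, (|a i| : ℝ) ≤ ((t * N : ℕ) : ℝ) ^ ((1 : ℝ) / t) + 1) ∧
      (|(∑ i, a i * (n i : ℤ) : ℤ)| : ℝ) ≤ ((t * N : ℕ) : ℝ) ^ ((1 : ℝ) / t) := by
  set x : ℝ := ((t * N : ℕ) : ℝ) ^ ((1 : ℝ) / t) with hx
  have htN : 0 < t * N := Nat.mul_pos ht hN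
  have hxpos : 0 ≤ x := Real.rpow_nonneg (by positivity) _
  set M : ℕ := ⌊x⌋₊ with hM
  have hMx : (M : ℝ) ≤ x := Nat.floor_le hxpos
  have hxM1 : x < M + 1 := Nat.lt_floor_add_one x
  -- key: t * N < (M+1)^t
  have hxt : x ^ t = ((t * N : ℕ) : ℝ) := by
    rw [hx, ← Real.rpow_natCast (((t * N : ℕ) : ℝ) ^ ((1 : ℝ) / t)) t,
      ← Real.rpow_mul (by positivity)]
    rw [one_div, inv_mul_cancel₀ (by exact_mod_cast ht.ne')]
    simp
  have hkey : t * N < (M + 1) ^ t := by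
    have h1 : x ^ t < ((M : ℝ) + 1) ^ t := by
      exact pow_lt_pow_left₀ hxM1 hxpos ht.ne'
    rw [hxt] at h1
    exact_mod_cast h1
  -- pigeonhole
  have hcard : (Finset.range (t * N)).card <
      (Finset.univ : Finset (Fin t → Fin (M + 1))).card := by
    simp [Finset.card_univ, hkey]
  have hmaps : ∀ b ∈ (Finset.univ : Finset (Fin t → Fin (M + 1))),
      (∑ i, ((b i : ℕ)) * n i) / (M + 1) ∈ Finset.range (t * N) := by
    intro b _
    rw [Finset.mem_range, Nat.div_lt_iff_lt_mul (Nat.succ_pos M)]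
    have hS : (∑ i, ((b i : ℕ)) * n i) ≤ ∑ _i : Fin t, M * N := by
      apply Finset.sum_le_sum
      intro i _
      exact Nat.mul_le_mul (Nat.lt_succ_iff.mp (b i).isLt) (hn i)
    simp only [Finset.sum_const, Finset.card_univ, Fintype.card_fin, smul_eq_mul] at hS
    calc (∑ i, ((b i : ℕ)) * n i) ≤ t * (M * N) := hS
      _ < t * N * (M + 1) := by nlinarith [htN]
  obtain ⟨b, -, c, -, hbc, heq⟩ :=
    Finset.exists_ne_map_eq_of_card_lt_of_maps_to hcard hmaps
  -- the sums of b and c are within M of each other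
  set p : ℕ := ∑ i, ((b i : ℕ)) * n i with hp
  set q : ℕ := ∑ i, ((c i : ℕ)) * n i with hq
  have heq' : p / (M + 1) = q / (M + 1) := heq
  have hclose : p ≤ q + M ∧ q ≤ p + M := by
    have h1 := Nat.div_add_mod p (M + 1)
    have h2 := Nat.div_add_mod q (M + 1)
    have h3 := Nat.mod_lt p (y := M + 1) (Nat.succ_pos M)
    have h4 := Nat.mod_lt q (y := M + 1) (Nat.succ_pos M)
    rw [heq'] at h1
    omega
  refine ⟨fun i => (b i : ℤ) - (c i : ℤ), ?_, ?_, ?_⟩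
  · obtain ⟨i, hi⟩ := Function.ne_iff.mp hbc
    exact ⟨i, by simpa [sub_eq_zero, Fin.ext_iff] using hi⟩
  · intro i
    have hb : ((b i : ℕ) : ℤ) ≤ M := by exact_mod_cast Nat.lt_succ_iff.mp (b i).isLt
    have hc : ((c i : ℕ) : ℤ) ≤ M := by exact_mod_cast Nat.lt_succ_iff.mp (c i).isLt
    have habs : |(b i : ℤ) - (c i : ℤ)| ≤ (M : ℤ) := by
      rw [abs_sub_le_iff]
      constructor <;> omega
    have : (|(b i : ℤ) - (c i : ℤ)| : ℝ) ≤ (M : ℝ) := by exact_mod_cast habs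
    push_cast
    push_cast at this
    linarith
  · have hsum : (∑ i, ((b i : ℤ) - (c i : ℤ)) * (n i : ℤ)) = (p : ℤ) - (q : ℤ) := by
      rw [hp, hq]
      push_cast
      rw [← Finset.sum_sub_distrib]
      congr 1
      ext i
      ring
    rw [hsum]
    have h1 : (p : ℤ) ≤ (q : ℤ) + M := by exact_mod_cast hclose.1
    have h2 : (q : ℤ) ≤ (p : ℤ) + M := by exact_mod_cast hclose.2
    have habs : |(p : ℤ) - (q : ℤ)| ≤ (M : ℤ) := by
      rw [abs_sub_le_iff]; constructor <;> linarith
    have : (|(p : ℤ) - (q : ℤ)| : ℝ) ≤ (M : ℝ) := by exact_mod_cast habs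
    push_cast at this ⊢
    linarith
end

section
/- Let f ∈ ℤ[x] have degree d ≥ 2, let n_1 < n_2 < ... < n_{d−k+1} be integers where 1 ≤ k ≤ d−1, and let q be a positive integer and a an integer such that f(n_i) ≡ a (mod q) for all i and gcd(q, n_i − n_j) = 1 for all i < j. Then q divides the integer A = Σ_{i=1}^{d−k+1} f(n_i) / Π_{j≠i}(n_i − n_j). -/
/-!
Reducing `f` modulo the monic nodal polynomial `∏ᵢ (X - nᵢ)` gives an integer polynomial of degree
at most `d - k` with the same values at the nodes, so by Lagrange interpolation its coefficient of
`X ^ (d - k)` is the sum `A`, which is therefore an integer. The same formula for the constant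
polynomial `1` gives `∑ᵢ 1 / ∏_{j ≠ i} (nᵢ - nⱼ) = 0`, so the values `f(nᵢ)` may be replaced by
`f(nᵢ) - a`, all divisible by `q`; clearing the denominators, which are coprime to `q`, shows `q ∣ A`.
-/

open Polynomial Finset

namespace Lagrange

variable {F ι : Type*} [Field F] [DecidableEq ι] {s : Finset ι} {v : ι → F}

theorem sum_inv_prod_sub_eq_zero (hvs : Set.InjOn v s) (hs : 2 ≤ #s) :
    ∑ i ∈ s, (∏ j ∈ s.erase i, (v i - v j))⁻¹ = 0 := by
  have h := coeff_eq_sum hvs (P := 1) (by rw [degree_one]; exact_mod_cast (by omega : 0 < #s))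
  simpa [coeff_one, show #s - 1 ≠ 0 by omega, eq_comm] using h

end Lagrange

theorem Polynomial.coeff_modByMonic_nodal_eq_sum_div {ι : Type*} [DecidableEq ι] (f : ℤ[X])
    {s : Finset ι} {n : ι → ℤ} (hns : Set.InjOn n s) :
    ((f %ₘ Lagrange.nodal s n).coeff (#s - 1) : ℚ) =
      ∑ i ∈ s, ((f.eval (n i) : ℤ) : ℚ) / ∏ j ∈ s.erase i, ((n i : ℚ) - n j) := by
  set x : ι → ℚ := fun i => (n i : ℚ)
  have hxs : Set.InjOn x s := fun i hi j hj h => hns hi hj (Int.cast_injective h)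
  have hnodal : (Lagrange.nodal s n).map (Int.castRingHom ℚ) = Lagrange.nodal s x := by
    simp [Lagrange.nodal, Polynomial.map_prod, x]
  set r := f.map (Int.castRingHom ℚ) %ₘ Lagrange.nodal s x with hr
  have hr_map : (f %ₘ Lagrange.nodal s n).map (Int.castRingHom ℚ) = r := by
    rw [hr, ← hnodal, map_modByMonic _ Lagrange.nodal_monic]
  have hr_deg : r.degree < #s := by
    rw [hr, ← Lagrange.degree_nodal (v := x)]
    exact degree_modByMonic_lt _ Lagrange.nodal_monic
  have hr_eval (i) (hi : i ∈ s) : r.eval (x i) = f.eval (n i) := by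
    rw [hr, modByMonic_eq_sub_mul_div, eval_sub, eval_mul,
      Lagrange.eval_nodal_at_node hi, zero_mul, sub_zero]
    simp [x, eval_intCast_map]
  rw [← eq_intCast (Int.castRingHom ℚ), ← coeff_map, hr_map, Lagrange.coeff_eq_sum hxs hr_deg]
  exact sum_congr rfl fun i hi => by rw [hr_eval i hi]

theorem Int.dvd_of_cast_eq_sum_div {ι : Type*} {s : Finset ι} {q A : ℤ} {c D : ι → ℤ}
    (hA : (A : ℚ) = ∑ i ∈ s, (c i : ℚ) / D i) (hc : ∀ i ∈ s, q ∣ c i)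
    (hD : ∀ i ∈ s, D i ≠ 0) (hqD : ∀ i ∈ s, IsCoprime q (D i)) : q ∣ A := by
  classical
  have hclear : A * ∏ i ∈ s, D i = ∑ i ∈ s, c i * ∏ j ∈ s.erase i, D j := by
    have : (A : ℚ) * ∏ i ∈ s, (D i : ℚ) = ∑ i ∈ s, c i * ∏ j ∈ s.erase i, (D j : ℚ) := by
      rw [hA, sum_mul]
      refine sum_congr rfl fun i hi => ?_
      rw [← mul_prod_erase s _ hi]
      field_simp [show (D i : ℚ) ≠ 0 by exact_mod_cast hD i hi]
    exact_mod_cast this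
  have hdvd : q ∣ A * ∏ i ∈ s, D i :=
    hclear ▸ dvd_sum fun i hi => (hc i hi).mul_right _
  exact (IsCoprime.prod_right hqD).dvd_of_dvd_mul_right hdvd

theorem stmt_3_general (f : Polynomial ℤ) (d : ℕ)
    (k : ℕ) (hk1 : 1 ≤ k) (hk2 : k ≤ d - 1)
    (n : Fin (d - k + 1) → ℤ) (hmono : StrictMono n)
    (q : ℤ) (a : ℤ)
    (hcong : ∀ i, f.eval (n i) ≡ a [ZMOD q])
    (hcop : ∀ i j, i ≠ j → IsCoprime q (n i - n j)) :
    ∃ A : ℤ,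
      (A : ℚ) = ∑ i, ((f.eval (n i) : ℤ) : ℚ) /
          ∏ j ∈ Finset.univ.erase i, ((n i : ℚ) - (n j : ℚ)) ∧
      q ∣ A := by
  have hinj : Set.InjOn n ((univ : Finset (Fin (d - k + 1))) : Set _) := hmono.injective.injOn
  have hA := f.coeff_modByMonic_nodal_eq_sum_div hinj
  generalize (f %ₘ Lagrange.nodal univ n).coeff _ = A at hA
  refine ⟨A, hA, ?_⟩
  have hnodes : ∑ i, (∏ j ∈ univ.erase i, ((n i : ℚ) - n j))⁻¹ = 0 :=
    Lagrange.sum_inv_prod_sub_eq_zero (fun i hi j hj h => hinj hi hj (Int.cast_injective h))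
      (by rw [card_univ, Fintype.card_fin]; omega)
  have hA_shift : (A : ℚ) =
      ∑ i, ((f.eval (n i) - a : ℤ) : ℚ) / ((∏ j ∈ univ.erase i, (n i - n j) : ℤ) : ℚ) := by
    rw [hA]
    push_cast
    simp only [sub_div, sum_sub_distrib, div_eq_mul_inv (a : ℚ), ← mul_sum, hnodes, mul_zero,
      sub_zero]
  refine Int.dvd_of_cast_eq_sum_div hA_shift (fun i _ => (hcong i).symm.dvd)
    (fun i _ => prod_ne_zero_iff.mpr fun j hj => sub_ne_zero.mpr ?_)
    (fun i _ => IsCoprime.prod_right fun j hj => hcop i j (ne_of_mem_erase hj).symm)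
  exact hinj.ne (mem_univ i) (mem_univ j) (ne_of_mem_erase hj).symm

/-- Let `f ∈ ℤ[x]` of degree `d ≥ 2`, `1 ≤ k ≤ d−1`, integers
`n₁ < ⋯ < n_{d−k+1}`, `q > 0`, `a ∈ ℤ` with `f(nᵢ) ≡ a (mod q)` for all `i` and
`gcd(q, nᵢ − nⱼ) = 1` for `i ≠ j`. Then the divided difference
`A = ∑ᵢ f(nᵢ) / ∏_{j≠i}(nᵢ − nⱼ)` is an integer divisible by `q`. -/
theorem stmt_3 (f : Polynomial ℤ) (d : ℕ) (hd : f.natDegree = d) (hd2 : 2 ≤ d)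
    (k : ℕ) (hk1 : 1 ≤ k) (hk2 : k ≤ d - 1)
    (n : Fin (d - k + 1) → ℤ) (hmono : StrictMono n)
    (q : ℤ) (hq : 0 < q) (a : ℤ)
    (hcong : ∀ i, f.eval (n i) ≡ a [ZMOD q])
    (hcop : ∀ i j, i ≠ j → IsCoprime q (n i - n j)) :
    ∃ A : ℤ,
      (A : ℚ) = ∑ i, ((f.eval (n i) : ℤ) : ℚ) /
          ∏ j ∈ Finset.univ.erase i, ((n i : ℚ) - (n j : ℚ)) ∧
      q ∣ A :=
  stmt_3_general f d k hk1 hk2 n hmono q a hcong hcop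
end

section
/- Let f ∈ ℤ[x] be squarefree of degree d with leading coefficient f_d, with roots α_1,...,α_d in the algebraic closure of ℚ, let K = ℚ(α_1,...,α_d) be the splitting field, let p be a prime with p ∤ f_d · disc(f), and let k ≥ 1. Then there exists a commutative ring A containing ℤ/p^kℤ and a ring homomorphism φ: ℤ[α_1,...,α_d] → A such that (i) φ restricts to a bijection between {α_1,...,α_d} and the set of roots of f in A, and (ii) for every γ ∈ ℤ[α_1,...,α_d] integral over ℤ with φ(γ) = 0, one has p^k | N_{K/ℚ}(γ). -/
/-!
Choose a valuation ring `V` of `ℚ̄` in which `p` is not a unit. It contains every algebraic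
integer, hence `ℤ[α₁, …, α_d]` (the `αᵢ` are integral up to the unit `f_d`), and since
`f_d · disc f` is prime to `p`, the differences `αᵢ - αⱼ` are units of `V`. Take `A = V / p^k V`:
it is a local ring of characteristic `p^k`, and in `A` the polynomial `f` is a unit times
`∏ (X - αᵢ)` with pairwise unit differences, so its roots in `A` are exactly the images of the
`αᵢ` (no Hensel lifting is needed). If `γ` maps to `0`, then `p^k ∣ γ` in `V`, and
`N(γ) = γ · ∏_{σ ≠ 1} σγ` with all conjugates integral, so `p^k ∣ N(γ)` in `V`; an integer
divisible by `p^k` in `V` is divisible by `p^k` in `ℤ`.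
-/

open Polynomial

theorem ValuationSubring.mem_of_isIntegral_int {K : Type*} [Field K] (V : ValuationSubring K)
    {x : K} (hx : IsIntegral ℤ x) : x ∈ V := by
  obtain ⟨y, rfl⟩ := IsIntegrallyClosed.isIntegral_iff.mp (hx.tower_top (A := V))
  exact y.2

theorem ValuationSubring.mem_of_aeval_eq_zero {K : Type*} [Field K] (V : ValuationSubring K)
    {f : ℤ[X]} (hf : IsUnit (f.leadingCoeff : V)) {x : K} (hx : aeval x f = 0) : x ∈ V := by
  have hfx : (f.leadingCoeff : K) * x ∈ V := by
    simpa [zsmul_eq_mul] using V.mem_of_isIntegral_int (isIntegral_leadingCoeff_smul f x hx)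
  obtain ⟨u, hu⟩ := hf
  have hu' : (((u⁻¹ : Vˣ) : V) : K) * (f.leadingCoeff : K) = 1 := by
    simpa [hu] using congrArg Subtype.val u.inv_mul
  simpa [← mul_assoc, hu'] using V.mul_mem _ _ (u⁻¹ : Vˣ).1.2 hfx

theorem exists_valuationSubring_not_isUnit_natCast (K : Type*) [Field K] [CharZero K]
    {p : ℕ} (hp : p.Prime) : ∃ V : ValuationSubring K, ¬ IsUnit (p : V) := by
  let Z := (Int.castRingHom K).range
  have hpZ : Ideal.span {(p : Z)} ≠ ⊤ := by
    rw [Ne, Ideal.span_singleton_eq_top, isUnit_iff_exists_inv]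
    rintro ⟨⟨_, n, rfl⟩, h⟩
    have hpn : ((p * n : ℤ) : K) = 1 := by simpa using congrArg Subtype.val h
    exact hp.not_dvd_one (Int.natCast_dvd_natCast.mp ⟨n, by exact_mod_cast hpn.symm⟩)
  obtain ⟨V, -, hV⟩ := Ideal.image_subset_nonunits_valuationSubring _ hpZ
  refine ⟨V, fun hpV => ?_⟩
  have hpV' : ((p : V) : K) ∈ V.nonunits := by
    simpa using hV ⟨p, Ideal.mem_span_singleton_self _, rfl⟩
  exact V.coe_mem_nonunits_iff.mp hpV' hpV

namespace IsLocalRing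

variable {B : Type*} [CommRing B] [IsLocalRing B] {p : ℕ}

theorem isUnit_intCast_of_not_dvd (hp : p.Prime) (hpB : ¬ IsUnit (p : B)) {z : ℤ}
    (hz : ¬ (p : ℤ) ∣ z) : IsUnit (z : B) := by
  obtain ⟨a, b, hab⟩ := (Nat.prime_iff_prime_int.mp hp).coprime_iff_not_dvd.mpr hz
  have hab : (a : B) * p + b * z = 1 := by exact_mod_cast congrArg (Int.cast : ℤ → B) hab
  refine (isUnit_or_isUnit_of_add_one hab).elim (fun h => ?_) fun h => ?_
  · exact absurd (isUnit_of_mul_isUnit_right h) hpB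
  · exact isUnit_of_mul_isUnit_right h

theorem natCast_pow_dvd_intCast_iff [IsDomain B] [CharZero B] (hp : p.Prime)
    (hpB : ¬ IsUnit (p : B)) {j : ℕ} {z : ℤ} :
    (p : B) ^ j ∣ (z : B) ↔ (p : ℤ) ^ j ∣ z := by
  refine ⟨fun h => ?_, fun h => by simpa using map_dvd (Int.castRingHom B) h⟩
  induction j generalizing z with
  | zero => exact one_dvd z
  | succ j ih =>
    obtain ⟨y, rfl⟩ := ih (dvd_of_mul_right_dvd (pow_succ (p : B) j ▸ h))
    obtain ⟨c, hc⟩ := h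
    have hy : (y : B) = p * c := by
      refine mul_left_cancel₀ (pow_ne_zero j (Nat.cast_ne_zero.mpr hp.ne_zero)) ?_
      push_cast at hc
      rw [hc]; ring
    have hpy : (p : ℤ) ∣ y := by
      by_contra hpy
      exact hpB (isUnit_of_mul_isUnit_left (hy ▸ isUnit_intCast_of_not_dvd hp hpB hpy))
    exact pow_succ (p : ℤ) j ▸ mul_dvd_mul_left _ hpy

theorem charP_quotient_span_natCast_pow [IsDomain B] [CharZero B] (hp : p.Prime)
    (hpB : ¬ IsUnit (p : B)) (k : ℕ) :
    CharP (B ⧸ Ideal.span {(p : B) ^ k}) (p ^ k) := by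
  refine ⟨fun n => ?_⟩
  rw [← map_natCast (Ideal.Quotient.mk _), Ideal.Quotient.eq_zero_iff_mem,
    Ideal.mem_span_singleton, ← Int.cast_natCast n, natCast_pow_dvd_intCast_iff hp hpB]
  exact_mod_cast Int.natCast_dvd_natCast

theorem quotient_span_natCast_pow (hpB : ¬ IsUnit (p : B)) {k : ℕ} (hk : k ≠ 0) :
    IsLocalRing (B ⧸ Ideal.span {(p : B) ^ k}) :=
  have : Nontrivial (B ⧸ Ideal.span {(p : B) ^ k}) := Ideal.Quotient.nontrivial_iff.mpr <| by
    rwa [Ne, Ideal.span_singleton_eq_top, isUnit_pow_iff hk]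
  .of_surjective' _ Ideal.Quotient.mk_surjective

theorem exists_eq_of_prod_sub_eq_zero {ι : Type*} [Fintype ι] [DecidableEq ι] {β : ι → B}
    (hβ : Pairwise fun i j => IsUnit (β i - β j)) {a : B} (ha : ∏ i, (a - β i) = 0) :
    ∃ i, a = β i := by
  obtain ⟨i, -, hi⟩ : ∃ i ∈ Finset.univ, ¬ IsUnit (a - β i) := by
    by_contra! h
    exact not_isUnit_zero (ha ▸ IsUnit.prod_iff.mpr h)
  have hrest : IsUnit (∏ j ∈ Finset.univ.erase i, (a - β j)) := by
    refine IsUnit.prod_iff.mpr fun j hj => ?_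
    by_contra hj'
    have hij : β i - β j ∈ maximalIdeal B := by
      rw [show β i - β j = (a - β j) - (a - β i) by ring]
      exact sub_mem hj' hi
    exact hij (hβ (Finset.ne_of_mem_erase hj).symm)
  refine ⟨i, sub_eq_zero.mp (hrest.mul_left_eq_zero.mp ?_)⟩
  rwa [Finset.mul_prod_erase _ (fun j => a - β j) (Finset.mem_univ i)]

end IsLocalRing

theorem pairwise_isUnit_sub_of_isUnit_prod {R ι : Type*} [CommRing R] [Fintype ι] [LinearOrder ι]
    {β : ι → R} (h : IsUnit (∏ i, ∏ j ∈ Finset.univ.filter (fun j => i < j), (β i - β j) ^ 2)) :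
    Pairwise fun i j => IsUnit (β i - β j) := by
  have key : ∀ i j, i < j → IsUnit (β i - β j) := fun i j hij =>
    isUnit_of_dvd_unit ((dvd_pow_self _ two_ne_zero).trans <|
      (Finset.dvd_prod_of_mem (fun j => (β i - β j) ^ 2)
        (Finset.mem_filter.mpr ⟨Finset.mem_univ j, hij⟩)).trans <|
      Finset.dvd_prod_of_mem (fun i => ∏ j ∈ Finset.univ.filter (fun j => i < j), (β i - β j) ^ 2)
        (Finset.mem_univ i)) h
  intro i j hij
  rcases hij.lt_or_gt with hij | hij
  · exact key i j hij
  · simpa using (key j i hij).neg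

theorem Polynomial.eval₂_eq_mul_prod_of_map_eq {R S ι : Type*} [CommRing R] [CommRing S]
    [Fintype ι] {f : ℤ[X]} {c : R} {β : ι → R}
    (hf : f.map (Int.castRingHom R) = C c * ∏ i, (X - C (β i))) (g : R →+* S) (a : S) :
    f.eval₂ (Int.castRingHom S) a = g c * ∏ i, (a - g (β i)) := by
  rw [eval₂_eq_eval_map, show Int.castRingHom S = g.comp (Int.castRingHom R) from
    RingHom.ext_int _ _, ← map_map, hf]
  simp [Polynomial.map_prod, eval_prod]

theorem IsLocalRing.bijOn_range_roots {R A ι : Type*} [CommRing R] [CommRing A] [IsLocalRing A]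
    [Fintype ι] {f : ℤ[X]} {c : R} {β : ι → R}
    (hf : f.map (Int.castRingHom R) = C c * ∏ i, (X - C (β i)))
    (φ : R →+* A) (hc : IsUnit (φ c)) (hβ : Pairwise fun i j => IsUnit (φ (β i - β j))) :
    Set.BijOn φ (Set.range β) {a | f.eval₂ (Int.castRingHom A) a = 0} := by
  classical
  have hroots : ∀ a : A, f.eval₂ (Int.castRingHom A) a = 0 ↔ ∏ i, (a - φ (β i)) = 0 := fun a => by
    rw [eval₂_eq_mul_prod_of_map_eq hf φ, hc.mul_right_eq_zero]
  have hinj : Function.Injective (φ ∘ β) := fun i j hij => by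
    by_contra hne
    exact (hβ hne).ne_zero (by simpa [sub_eq_zero] using hij)
  refine ⟨?_, hinj.injOn_range, ?_⟩
  · rintro _ ⟨i, rfl⟩
    exact (hroots _).mpr (Finset.prod_eq_zero (Finset.mem_univ i) (sub_self _))
  · intro a ha
    obtain ⟨i, rfl⟩ := exists_eq_of_prod_sub_eq_zero (by simpa using hβ) ((hroots a).mp ha)
    exact ⟨β i, ⟨i, rfl⟩, rfl⟩

theorem exists_mem_valuationSubring_algebraMap_norm_eq_mul {K F E : Type*} [Field K] [Field F]
    [Field E] [Algebra K F] [Algebra K E] [FiniteDimensional K F] [Algebra.IsSeparable K F]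
    [IsAlgClosed E] (V : ValuationSubring E) {x : F} (hx : IsIntegral ℤ x) (σ₀ : F →ₐ[K] E) :
    ∃ t ∈ V, algebraMap K E (Algebra.norm K x) = σ₀ x * t := by
  classical
  rw [Algebra.norm_eq_prod_embeddings K E x, ← Finset.mul_prod_erase _ _ (Finset.mem_univ σ₀)]
  exact ⟨_, prod_mem fun σ _ => V.mem_of_isIntegral_int (hx.map σ.toRingHom.toIntAlgHom), rfl⟩

theorem exists_intCast_eq_norm_and_dvd {F E : Type*} [Field F] [Field E] [Algebra ℚ F]
    [Algebra ℚ E] [FiniteDimensional ℚ F] [IsAlgClosed E] (V : ValuationSubring E) {p k : ℕ}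
    (hp : p.Prime) (hpV : ¬ IsUnit (p : V)) (σ₀ : F →ₐ[ℚ] E) {x : F} (hx : IsIntegral ℤ x)
    {c : V} (hc : (c : E) = σ₀ x) (hpc : (p : V) ^ k ∣ c) :
    ∃ z : ℤ, (z : ℚ) = Algebra.norm ℚ x ∧ (p : ℤ) ^ k ∣ z := by
  have : CharZero E := charZero_of_injective_algebraMap (algebraMap ℚ E).injective
  obtain ⟨z, hz⟩ := IsIntegrallyClosed.isIntegral_iff.mp (Algebra.isIntegral_norm ℚ hx)
  obtain ⟨t, htV, ht⟩ := exists_mem_valuationSubring_algebraMap_norm_eq_mul V hx σ₀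
  refine ⟨z, by simpa using hz, ?_⟩
  have hzV : (z : V) = c * ⟨t, htV⟩ := Subtype.ext <| by
    simpa [hc] using (congrArg (algebraMap ℚ E) hz).trans ht
  rw [← IsLocalRing.natCast_pow_dvd_intCast_iff hp hpV, hzV]
  exact dvd_mul_of_dvd_left hpc _

theorem stmt_6_general (f : Polynomial ℤ) (d : ℕ) (α : Fin d → AlgebraicClosure ℚ)
    (hsplit : f.map (algebraMap ℤ (AlgebraicClosure ℚ)) =
      Polynomial.C ((f.leadingCoeff : ℤ) : AlgebraicClosure ℚ) *
        ∏ i, (Polynomial.X - Polynomial.C (α i)))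
    (Df : ℤ)
    (hDf : (Df : AlgebraicClosure ℚ) =
      ((f.leadingCoeff : ℤ) : AlgebraicClosure ℚ) ^ (2 * d - 2) *
        ∏ i, ∏ j ∈ Finset.univ.filter (fun j => i < j), (α i - α j) ^ 2)
    (p : ℕ) (hp : p.Prime) (hpd : ¬ (p : ℤ) ∣ f.leadingCoeff * Df)
    (k : ℕ) (hk : 1 ≤ k) :
    ∃ (A : Type) (_ : CommRing A) (ψ : ZMod (p ^ k) →+* A),
      Function.Injective ψ ∧
      ∃ φ : (Algebra.adjoin ℤ (Set.range α)) →+* A,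
        Set.BijOn (fun x => φ x)
          {x : Algebra.adjoin ℤ (Set.range α) |
            (x : AlgebraicClosure ℚ) ∈ Set.range α}
          {a : A | Polynomial.eval₂ (Int.castRingHom A) a f = 0} ∧
        ∀ γ : (Algebra.adjoin ℤ (Set.range α)),
          IsIntegral ℤ (γ : AlgebraicClosure ℚ) →
          ∀ hγ : (γ : AlgebraicClosure ℚ) ∈ IntermediateField.adjoin ℚ (Set.range α),
          φ γ = 0 →
          ∃ z : ℤ, (z : ℚ) = Algebra.norm ℚ
              (⟨(γ : AlgebraicClosure ℚ), hγ⟩ :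
                IntermediateField.adjoin ℚ (Set.range α)) ∧
            (p : ℤ) ^ k ∣ z := by
  obtain ⟨V, hpV⟩ := exists_valuationSubring_not_isUnit_natCast (AlgebraicClosure ℚ) hp
  set R := Algebra.adjoin ℤ (Set.range α)
  have hfd : IsUnit (f.leadingCoeff : V) :=
    IsLocalRing.isUnit_intCast_of_not_dvd hp hpV fun h => hpd (h.mul_right _)
  have hroot : ∀ i, aeval (α i) f = 0 := fun i => by
    rw [aeval_def, eval₂_eq_eval_map, hsplit]
    simp [eval_prod, Finset.prod_eq_zero (Finset.mem_univ i)]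
  have hαV : ∀ i, α i ∈ V := fun i => V.mem_of_aeval_eq_zero hfd (hroot i)
  have hRV : ∀ x ∈ R, x ∈ V := fun x hx =>
    Algebra.adjoin_le (S := subalgebraOfSubring V.toSubring) (Set.range_subset_iff.mpr hαV) hx
  let ι : R →+* V := (SubringClass.subtype R).codRestrict V.toSubring fun x => hRV x x.2
  let I : Ideal V := Ideal.span {(p : V) ^ k}
  have : IsLocalRing (V ⧸ I) := IsLocalRing.quotient_span_natCast_pow hpV (by omega)
  have := IsLocalRing.charP_quotient_span_natCast_pow hp hpV k
  let φ : R →+* V ⧸ I := (Ideal.Quotient.mk I).comp ι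
  let αR : Fin d → R := fun i => ⟨α i, Algebra.subset_adjoin ⟨i, rfl⟩⟩
  have hsplitR : f.map (Int.castRingHom R) = C (f.leadingCoeff : R) * ∏ i, (X - C (αR i)) := by
    apply map_injective (SubringClass.subtype R) Subtype.val_injective
    rw [Polynomial.map_map, show (SubringClass.subtype R).comp (Int.castRingHom R) =
      algebraMap ℤ _ from RingHom.ext_int _ _, hsplit]
    simp [Polynomial.map_prod, αR]
  let αV : Fin d → V := fun i => ⟨α i, hαV i⟩
  have hDfV : (Df : V) = (f.leadingCoeff : V) ^ (2 * d - 2) *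
      ∏ i, ∏ j ∈ Finset.univ.filter (fun j => i < j), (αV i - αV j) ^ 2 :=
    Subtype.ext (by simpa using hDf)
  have hαV_sub : Pairwise fun i j => IsUnit (αV i - αV j) :=
    pairwise_isUnit_sub_of_isUnit_prod <| isUnit_of_mul_isUnit_right <|
      hDfV ▸ IsLocalRing.isUnit_intCast_of_not_dvd hp hpV fun h => hpd (h.mul_left _)
  refine ⟨V ⧸ I, inferInstance, ZMod.castHom dvd_rfl _, ZMod.castHom_injective _, φ, ?_, ?_⟩
  · have hrange : {x : R | (x : AlgebraicClosure ℚ) ∈ Set.range α} = Set.range αR := by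
      ext x
      exact ⟨fun ⟨i, hi⟩ => ⟨i, Subtype.ext hi⟩, fun ⟨i, hi⟩ => ⟨i, congrArg Subtype.val hi⟩⟩
    rw [hrange]
    exact IsLocalRing.bijOn_range_roots hsplitR φ
      (by simpa [φ] using hfd.map (Ideal.Quotient.mk I))
      fun i j hij => (hαV_sub hij).map (Ideal.Quotient.mk I)
  · intro γ hγint hγK hφγ
    have : FiniteDimensional ℚ (IntermediateField.adjoin ℚ (Set.range α)) :=
      IntermediateField.finiteDimensional_adjoin fun x _ =>
        ((AlgebraicClosure.isAlgebraic ℚ).isAlgebraic x).isIntegral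
    exact exists_intCast_eq_norm_and_dvd V hp hpV (IntermediateField.val _)
      ((isIntegral_algebraMap_iff Subtype.val_injective).mp hγint) (c := ι γ) rfl
      (Ideal.mem_span_singleton.mp (Ideal.Quotient.eq_zero_iff_mem.mp hφγ))

/-- Reduction homomorphism modulo a prime power. `f ∈ ℤ[x]` squarefree of
degree `d` with roots `α₁,…,α_d` in the algebraic closure of `ℚ`,
`K = ℚ(α₁,…,α_d)` its splitting field, `p` a prime with
`p ∤ f_d · disc(f)` (here `Df = disc f = f_d^{2d-2} ∏_{i<j}(αᵢ-αⱼ)²`), `k ≥ 1`.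
Then there is a commutative ring `A` containing `ℤ/p^kℤ` and a ring
homomorphism `φ : ℤ[α₁,…,α_d] → A` such that (i) `φ` restricts to a bijection
between `{α₁,…,α_d}` and the roots of `f` in `A`, and (ii) every
`γ ∈ ℤ[α₁,…,α_d]` integral over `ℤ` with `φ(γ) = 0` satisfies
`p^k ∣ N_{K/ℚ}(γ)`. -/
theorem stmt_6 (f : Polynomial ℤ) (d : ℕ) (hd : f.natDegree = d)
    (hsf : Squarefree f) (α : Fin d → AlgebraicClosure ℚ)
    (hsplit : f.map (algebraMap ℤ (AlgebraicClosure ℚ)) =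
      Polynomial.C ((f.leadingCoeff : ℤ) : AlgebraicClosure ℚ) *
        ∏ i, (Polynomial.X - Polynomial.C (α i)))
    (Df : ℤ)
    (hDf : (Df : AlgebraicClosure ℚ) =
      ((f.leadingCoeff : ℤ) : AlgebraicClosure ℚ) ^ (2 * d - 2) *
        ∏ i, ∏ j ∈ Finset.univ.filter (fun j => i < j), (α i - α j) ^ 2)
    (p : ℕ) (hp : p.Prime) (hpd : ¬ (p : ℤ) ∣ f.leadingCoeff * Df)
    (k : ℕ) (hk : 1 ≤ k) :
    ∃ (A : Type) (_ : CommRing A) (ψ : ZMod (p ^ k) →+* A),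
      Function.Injective ψ ∧
      ∃ φ : (Algebra.adjoin ℤ (Set.range α)) →+* A,
        Set.BijOn (fun x => φ x)
          {x : Algebra.adjoin ℤ (Set.range α) |
            (x : AlgebraicClosure ℚ) ∈ Set.range α}
          {a : A | Polynomial.eval₂ (Int.castRingHom A) a f = 0} ∧
        ∀ γ : (Algebra.adjoin ℤ (Set.range α)),
          IsIntegral ℤ (γ : AlgebraicClosure ℚ) →
          ∀ hγ : (γ : AlgebraicClosure ℚ) ∈ IntermediateField.adjoin ℚ (Set.range α),
          φ γ = 0 →
          ∃ z : ℤ, (z : ℚ) = Algebra.norm ℚ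
              (⟨(γ : AlgebraicClosure ℚ), hγ⟩ :
                IntermediateField.adjoin ℚ (Set.range α)) ∧
            (p : ℤ) ^ k ∣ z :=
  stmt_6_general f d α hsplit Df hDf p hp hpd k hk
end

section
/- Let d = rs with r, s ≥ 2 integers, m = min(⌊3d/4⌋, d−2), W_{d,r} = Σ_{k=1}^{m} max(d − kr, r − ⌊kr/d⌋), and V_{d,r} = Σ_{k=1}^{m} (d − max(k, r)). Then W_{d,r} < V_{d,r}. -/
/-- For `d = rs` with `r, s ≥ 2`, setting `m = min(⌊3d/4⌋, d−2)`,
`W_{d,r} = ∑_{k=1}^m max(d − kr, r − ⌊kr/d⌋)` and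
`V_{d,r} = ∑_{k=1}^m (d − max(k, r))`, one has `W_{d,r} < V_{d,r}`. -/
theorem stmt_13 (d r s : ℕ) (hr : 2 ≤ r) (hs : 2 ≤ s) (hd : d = r * s) :
    (∑ k ∈ Finset.Icc 1 (min (3 * d / 4) (d - 2)),
        max (d - k * r) (r - k * r / d)) <
      ∑ k ∈ Finset.Icc 1 (min (3 * d / 4) (d - 2)), (d - max k r) := by
  have hd4 : 4 ≤ d := by
    calc (4 : ℕ) = 2 * 2 := rfl
    _ ≤ r * s := Nat.mul_le_mul hr hs
    _ = d := hd.symm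
  have h2r : 2 * r ≤ d := by
    calc 2 * r = r * 2 := by ring
    _ ≤ r * s := Nat.mul_le_mul_left r hs
    _ = d := hd.symm
  have hdiv : ∀ k, k * r / d = k / s := by
    intro k
    rw [hd, mul_comm r s, Nat.mul_div_mul_right _ _ (by omega : 0 < r)]
  apply Finset.sum_lt_sum
  · intro k hk
    rw [Finset.mem_Icc] at hk
    obtain ⟨hk1, hk2⟩ := hk
    have hm : k ≤ d - 2 := le_trans hk2 (min_le_right _ _)
    rw [hdiv]
    apply max_le
    · apply Nat.sub_le_sub_left
      exact max_le (Nat.le_mul_of_pos_right k (by omega)) (Nat.le_mul_of_pos_left r (by omega))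
    · rcases le_or_gt k r with h | h
      · rw [max_eq_right h]
        calc r - k / s ≤ r := Nat.sub_le _ _
        _ ≤ d - r := by omega
      · rw [max_eq_left h.le]
        set q := k / s with hq_def
        set t := k % s with ht_def
        have hq : q < r := by
          rw [hq_def, Nat.div_lt_iff_lt_mul (by omega : 0 < s), ← hd]
          omega
        have hk' : s * q + t = k := Nat.div_add_mod k s
        have ht : t < s := Nat.mod_lt _ (by omega)
        have e1 : s * (r - q) = (r - q) * (s - 1) + (r - q) := by
          rw [mul_comm s (r - q), ← Nat.mul_succ]
          congr 1
          omega
        have e2 : s - 1 ≤ (r - q) * (s - 1) := Nat.le_mul_of_pos_left _ (by omega)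
        have e3 : s * q + s * (r - q) = d := by
          rw [← Nat.mul_add, Nat.add_sub_cancel' hq.le, hd, mul_comm]
        generalize hA : s * q = A at hk' e3
        generalize hB : s * (r - q) = B at e1 e3
        generalize hC : (r - q) * (s - 1) = C at e1 e2
        clear hA hB hC hq_def ht_def hdiv hd
        omega
  · refine ⟨2, ?_, ?_⟩
    · rw [Finset.mem_Icc]
      refine ⟨by omega, ?_⟩
      have : 3 ≤ 3 * d / 4 := by omega
      omega
    · rw [hdiv, max_eq_right hr]
      rcases eq_or_lt_of_le hs with hs2 | hs3
      · have hd2 : d = 2 * r := by rw [hd, ← hs2]; ring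
        have h1 : (2 : ℕ) / s = 1 := by rw [← hs2]
        rw [h1]
        omega
      · have h0 : (2 : ℕ) / s = 0 := Nat.div_eq_of_lt hs3
        rw [h0]
        have h2r' : 2 * r < d := by
          calc 2 * r < 3 * r := by omega
          _ = r * 3 := by ring
          _ ≤ r * s := Nat.mul_le_mul_left r hs3
          _ = d := hd.symm
        omega
end

section
/- Let f ∈ ℤ[x] be squarefree of degree d without integer roots, let S be its set of roots, suppose S is partitioned into nonempty potent subsets S_1, ..., S_r with dim_ℚ⟨S ∪ {1}⟩ = d + 1 − r, and suppose α_1, ..., α_t ∈ S are distinct roots satisfying a nontrivial ℚ-linear relation a_1 α_1 + ... + a_t α_t = u with u ∈ ℚ and not all a_i zero. Then S_i ⊆ {α_1, ..., α_t} for some i. -/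
/-!
If every `Sᵢ` contains a root `βᵢ` outside `{α₁, …, α_t}`, potency of `Sᵢ` puts `βᵢ` in the
`ℚ`-span of `(Sᵢ \ {βᵢ}) ∪ {1}`, so `S ∪ {1}` is spanned by `G = ⋃ᵢ (Sᵢ \ {βᵢ}) ∪ {1}`, a set of
at most `d - r + 1` elements. As `1` is not a root, the relation makes `{α₁, …, α_t, 1} ⊆ G`
linearly dependent, hence `dim ⟨S ∪ {1}⟩ < |G| ≤ d + 1 - r`.
-/

open Polynomial
open scoped Classical

def Potent (T : Finset (AlgebraicClosure ℚ)) : Prop :=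
  T.Nonempty ∧ ∃ c : AlgebraicClosure ℚ → ℕ, (∀ β ∈ T, 0 < c β) ∧
    ∃ z : ℤ, (∑ β ∈ T, (c β : AlgebraicClosure ℚ) * β) = (z : AlgebraicClosure ℚ)

open Module Submodule Finset

theorem finrank_span_finset_lt_card_of_not_linearIndepOn {K V : Type*} [DivisionRing K]
    [AddCommGroup V] [Module K V] {G : Finset V} {H : Set V} (hHG : H ⊆ G)
    (hH : ¬LinearIndepOn K id H) : finrank K (span K (G : Set V)) < #G := by
  refine (finrank_span_finset_le_card G).lt_of_ne fun hG => hH (LinearIndepOn.mono ?_ hHG)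
  refine linearIndependent_iff_card_eq_finrank_span.2 ?_
  convert hG.symm using 2 <;> simp

theorem not_linearIndepOn_insert_range_of_sum_smul_eq {K V ι : Type*} [Field K]
    [AddCommGroup V] [Module K V] [Fintype ι] {α : ι → V} (hα : Function.Injective α) {x : V}
    (hx : x ∉ Set.range α) {a : ι → K} (ha : ∃ i, a i ≠ 0) {u : K}
    (hrel : ∑ i, a i • α i = u • x) : ¬LinearIndepOn K id (insert x (Set.range α)) := by
  rw [linearIndepOn_id_insert hx, linearIndepOn_id_range_iff hα, not_and_or, not_not]
  by_cases hu : u = 0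
  · left
    obtain ⟨i, hi⟩ := ha
    exact fun hli => hi (Fintype.linearIndependent_iff.1 hli a (by simpa [hu] using hrel) i)
  · right
    rw [← smul_mem_iff _ hu, ← hrel]
    exact sum_mem fun i _ => smul_mem _ _ (subset_span ⟨i, rfl⟩)

theorem Submodule.mem_of_sum_smul_mem {K V : Type*} [DivisionRing K] [AddCommGroup V] [Module K V]
    {W : Submodule K V} {T : Finset V} {c : V → K} {β : V} (hβ : β ∈ T) (hc : c β ≠ 0)
    (hsum : ∑ x ∈ T, c x • x ∈ W) (hT : ∀ x ∈ T.erase β, x ∈ W) : β ∈ W := by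
  rw [← add_sum_erase T _ hβ] at hsum
  rw [← smul_mem_iff W hc]
  exact (W.add_mem_iff_left (sum_mem fun x hx => smul_mem _ _ (hT x hx))).1 hsum

theorem Finset.card_biUnion_erase_add_card {ι α : Type*} [Fintype ι] {S : ι → Finset α}
    (hS : Pairwise fun i j => Disjoint (S i) (S j)) {β : ι → α} (hβ : ∀ i, β i ∈ S i) :
    #(univ.biUnion fun i => (S i).erase (β i)) + Fintype.card ι = #(univ.biUnion S) := by
  rw [card_biUnion fun i _ j _ hij => (hS hij).mono (erase_subset _ _) (erase_subset _ _),
    card_biUnion fun i _ j _ hij => hS hij, ← card_univ, card_eq_sum_ones, ← sum_add_distrib]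
  exact sum_congr rfl fun i _ => card_erase_add_one (hβ i)

theorem Polynomial.card_toFinset_aroots_le_natDegree {T S : Type*} [CommRing T] [CommRing S]
    [IsDomain S] [Algebra T S] (p : T[X]) : #(p.aroots S).toFinset ≤ p.natDegree :=
  calc #(p.aroots S).toFinset ≤ Multiset.card (p.aroots S) := Multiset.toFinset_card_le _
    _ ≤ (p.map (algebraMap T S)).natDegree := card_roots' _
    _ ≤ p.natDegree := natDegree_map_le

theorem Polynomial.one_notMem_aroots_of_eval_one_ne_zero {S : Type*} [CommRing S] [IsDomain S]
    [CharZero S] {f : ℤ[X]} (hf : f.eval 1 ≠ 0) : (1 : S) ∉ f.aroots S := by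
  rw [mem_aroots', not_and_or]
  right
  rw [← map_one (algebraMap ℤ S), aeval_algebraMap_apply_eq_algebraMap_eval, eq_intCast]
  exact_mod_cast hf

theorem Potent.mem_span_insert_one_erase {T : Finset (AlgebraicClosure ℚ)} (hT : Potent T)
    {β : AlgebraicClosure ℚ} (hβ : β ∈ T) :
    β ∈ span ℚ (insert 1 (T.erase β : Set (AlgebraicClosure ℚ))) := by
  obtain ⟨-, c, hc, z, hz⟩ := hT
  refine mem_of_sum_smul_mem (c := fun x => (c x : ℚ)) hβ (by exact_mod_cast (hc β hβ).ne') ?_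
    fun x hx => subset_span (Set.mem_insert_of_mem _ hx)
  simp_rw [Nat.cast_smul_eq_nsmul, nsmul_eq_mul, hz, ← zsmul_one]
  exact zsmul_mem (subset_span (Set.mem_insert _ _)) z

theorem span_biUnion_union_one_le_of_potent {ι : Type*} [Fintype ι]
    {S : ι → Finset (AlgebraicClosure ℚ)} (hpot : ∀ i, Potent (S i)) (β : ι → AlgebraicClosure ℚ) :
    span ℚ ((univ.biUnion S : Set (AlgebraicClosure ℚ)) ∪ {1}) ≤
      span ℚ ((insert 1 (univ.biUnion fun i => (S i).erase (β i)) : Finset _) : Set _) := by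
  rw [span_le, coe_insert, Set.union_singleton]
  rintro γ (rfl | hγ)
  · exact subset_span (Set.mem_insert _ _)
  obtain ⟨i, -, hγi⟩ := mem_biUnion.1 hγ
  have hsub : (S i).erase (β i) ⊆ univ.biUnion fun i => (S i).erase (β i) :=
    subset_biUnion_of_mem (fun i => (S i).erase (β i)) (mem_univ i)
  by_cases hγβ : γ = β i
  · subst hγβ
    exact span_mono (Set.insert_subset_insert (coe_subset.2 hsub))
      ((hpot i).mem_span_insert_one_erase hγi)
  · exact subset_span (Set.mem_insert_of_mem _ (hsub (mem_erase.2 ⟨hγβ, hγi⟩)))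

theorem stmt_19_general (f : Polynomial ℤ) (d : ℕ) (hd : f.natDegree = d)
    (hroots : ∀ n : ℤ, f.eval n ≠ 0)
    (r : ℕ) (S : Fin r → Finset (AlgebraicClosure ℚ))
    (hpart : ∀ β : AlgebraicClosure ℚ,
      (β ∈ (f.aroots (AlgebraicClosure ℚ)).toFinset ↔ ∃ i, β ∈ S i))
    (hdisj : ∀ i j, i ≠ j → Disjoint (S i) (S j))
    (hpot : ∀ i, Potent (S i))
    (hdim : Module.finrank ℚ (Submodule.span ℚ
        (((f.aroots (AlgebraicClosure ℚ)).toFinset : Set (AlgebraicClosure ℚ)) ∪ {1}))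
      = d + 1 - r)
    (t : ℕ) (α : Fin t → AlgebraicClosure ℚ) (hαinj : Function.Injective α)
    (hαS : ∀ i, α i ∈ (f.aroots (AlgebraicClosure ℚ)).toFinset)
    (a : Fin t → ℚ) (hne : ∃ i, a i ≠ 0) (u : ℚ)
    (hrel : ∑ i, a i • α i = (algebraMap ℚ (AlgebraicClosure ℚ)) u) :
    ∃ i, (S i : Set (AlgebraicClosure ℚ)) ⊆ Set.range α := by
  by_contra! hcon
  choose β hβS hβα using fun i => Set.not_subset.1 (hcon i)
  set R := (f.aroots (AlgebraicClosure ℚ)).toFinset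
  set B := univ.biUnion fun i => (S i).erase (β i)
  have hR : R = univ.biUnion S := by ext γ; simp [R, hpart γ]
  have hαB : Set.range α ⊆ B := by
    rintro _ ⟨j, rfl⟩
    obtain ⟨i, hi⟩ := (hpart (α j)).1 (hαS j)
    exact mem_biUnion.2 ⟨i, mem_univ i, mem_erase.2 ⟨fun h => hβα i (h ▸ ⟨j, rfl⟩), hi⟩⟩
  have h1α : (1 : AlgebraicClosure ℚ) ∉ Set.range α := by
    rintro ⟨j, hj⟩
    exact one_notMem_aroots_of_eval_one_ne_zero (hroots 1) (Multiset.mem_toFinset.1 (hj ▸ hαS j))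
  have hdep := not_linearIndepOn_insert_range_of_sum_smul_eq hαinj h1α hne
    (hrel.trans (Algebra.algebraMap_eq_smul_one u))
  have hlt := finrank_span_finset_lt_card_of_not_linearIndepOn (G := insert 1 B)
    (by simpa using Set.insert_subset_insert hαB) hdep
  have hle : finrank ℚ (span ℚ ((R : Set (AlgebraicClosure ℚ)) ∪ {1})) ≤
      finrank ℚ (span ℚ ((insert 1 B : Finset _) : Set (AlgebraicClosure ℚ))) :=
    Submodule.finrank_mono (hR ▸ span_biUnion_union_one_le_of_potent hpot β)
  have hcard : #B + r = #R := by
    simpa [hR] using card_biUnion_erase_add_card (fun i j hij => hdisj i j hij) hβS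
  have hRd : #R ≤ d := hd ▸ f.card_toFinset_aroots_le_natDegree
  have hG := card_insert_le 1 B
  omega

/-- Key linear-algebra step in Theorem 4: let `f` be squarefree of degree `d`
without integer roots, with root set `S` partitioned into nonempty potent
subsets `S₁, …, S_r` such that `dim_ℚ⟨S ∪ {1}⟩ = d + 1 − r`.  If distinct
roots `α₁, …, α_t ∈ S` satisfy a nontrivial `ℚ`-linear relation
`a₁α₁ + ⋯ + a_tα_t = u` with `u ∈ ℚ`, then `Sᵢ ⊆ {α₁, …, α_t}` for some `i`. -/
theorem stmt_19 (f : Polynomial ℤ) (d : ℕ) (hd : f.natDegree = d)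
    (hsf : Squarefree f) (hroots : ∀ n : ℤ, f.eval n ≠ 0)
    (r : ℕ) (S : Fin r → Finset (AlgebraicClosure ℚ))
    (hpart : ∀ β : AlgebraicClosure ℚ,
      (β ∈ (f.aroots (AlgebraicClosure ℚ)).toFinset ↔ ∃ i, β ∈ S i))
    (hdisj : ∀ i j, i ≠ j → Disjoint (S i) (S j))
    (hpot : ∀ i, Potent (S i))
    (hdim : Module.finrank ℚ (Submodule.span ℚ
        (((f.aroots (AlgebraicClosure ℚ)).toFinset : Set (AlgebraicClosure ℚ)) ∪ {1}))
      = d + 1 - r)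
    (t : ℕ) (α : Fin t → AlgebraicClosure ℚ) (hαinj : Function.Injective α)
    (hαS : ∀ i, α i ∈ (f.aroots (AlgebraicClosure ℚ)).toFinset)
    (a : Fin t → ℚ) (hne : ∃ i, a i ≠ 0) (u : ℚ)
    (hrel : ∑ i, a i • α i = (algebraMap ℚ (AlgebraicClosure ℚ)) u) :
    ∃ i, (S i : Set (AlgebraicClosure ℚ)) ⊆ Set.range α :=
  stmt_19_general f d hd hroots r S hpart hdisj hpot hdim t α hαinj hαS a hne u hrel
end
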